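/- Let tau be a forcibly self-complementary degree sequence and let G be a realization of tau with l distinct vertex degrees. Then for every i = 1, ..., l, the i-th slice S_i of G is self-complementary, and the degree sequence of S_i is forcibly self-complementary. -/

import Mathlib

open SimpleGraph

/-!
A self-complementary graph `G` on `n` vertices carries an isomorphism `σ : G ≃g Gᶜ`, which sends a
vertex of degree `k` to one of degree `n - 1 - k`. Hence the set of degrees is closed under
`k ↦ n - 1 - k`, so `d i.rev = n - 1 - d i`, and `σ` maps the slice `V_i ∪ V_{rev i}` onto itself;
its restriction makes the slice self-complementary.

For the second claim, let `H` realize the degree sequence of the slice `S`. Replacing the induced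
subgraph of `G` on `S` by a copy of `H` matched degree-by-degree with `S` leaves every degree of
`G` unchanged, so the new graph `G'` realizes the same forcibly self-complementary sequence and has
the same slices. By the first claim applied to `G'`, its slice on `S`, which is a copy of `H`, is
self-complementary.
-/

/-- The degree of a vertex, as the cardinality of its neighbor set. -/
noncomputable def deg {V : Type*} (G : SimpleGraph V) (v : V) : ℕ := (G.neighborSet v).ncard

/-- The degree sequence of a finite graph, as a multiset (which determines the
non-increasing sequence of vertex degrees). -/
noncomputable def degMultiset {V : Type*} [Finite V] (G : SimpleGraph V) : Multiset ℕ :=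
  letI := Fintype.ofFinite V
  Finset.univ.val.map fun v => deg G v

/-- A graph is self-complementary if it is isomorphic to its complement. -/
def IsSelfCompl {V : Type*} (G : SimpleGraph V) : Prop := Nonempty (G ≃g Gᶜ)

/-- A degree sequence is forcibly self-complementary if every realization of it
is self-complementary. -/
def ForciblySC (τ : Multiset ℕ) : Prop :=
  ∀ G : SimpleGraph (Fin (Multiset.card τ)), degMultiset G = τ → IsSelfCompl G

section

variable {V W : Type*}

namespace SimpleGraph

lemma deg_eq_degree [Fintype V] (G : SimpleGraph V) [DecidableRel G.Adj] (v : V) :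
    deg G v = G.degree v := by
  rw [deg, ← card_neighborSet_eq_degree, Set.ncard_eq_toFinset_card', Set.toFinset_card]

lemma deg_lt_card [Finite V] (G : SimpleGraph V) (v : V) : deg G v < Nat.card V := by
  have := Fintype.ofFinite V
  classical
  rw [deg_eq_degree, Nat.card_eq_fintype_card]
  exact G.degree_lt_card_verts v

lemma deg_compl [Finite V] (G : SimpleGraph V) (v : V) :
    deg Gᶜ v = Nat.card V - 1 - deg G v := by
  have := Fintype.ofFinite V
  classical
  rw [deg_eq_degree, deg_eq_degree, degree_compl, Nat.card_eq_fintype_card]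

lemma deg_induce (G : SimpleGraph V) (s : Set V) (v : s) :
    deg (G.induce s) v = (G.neighborSet v ∩ s).ncard := by
  have : (G.induce s).neighborSet v = Subtype.val ⁻¹' G.neighborSet v := by
    ext w
    simp
  rw [deg, this, ← Set.ncard_image_of_injective _ Subtype.val_injective,
    Subtype.image_preimage_coe, Set.inter_comm]

lemma deg_eq_deg_induce_add [Finite V] (G : SimpleGraph V) {s : Set V} {v : V} (hv : v ∈ s) :
    deg G v = deg (G.induce s) ⟨v, hv⟩ + (G.neighborSet v \ s).ncard := by
  rw [deg_induce, Set.ncard_inter_add_ncard_sdiff_eq_ncard _ _ (Set.toFinite _), deg]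

lemma induce_compl (G : SimpleGraph V) (s : Set V) : Gᶜ.induce s = (G.induce s)ᶜ := by
  ext v w
  simp [Subtype.ext_iff]

lemma degMultiset_eq_map_univ [Fintype V] (G : SimpleGraph V) :
    degMultiset G = Finset.univ.val.map (deg G) := by
  rw [degMultiset, Subsingleton.elim (Fintype.ofFinite V)]

lemma card_degMultiset [Finite V] (G : SimpleGraph V) :
    Multiset.card (degMultiset G) = Nat.card V := by
  have := Fintype.ofFinite V
  rw [degMultiset_eq_map_univ, Multiset.card_map, Finset.card_val, Finset.card_univ,
    Nat.card_eq_fintype_card]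

lemma degMultiset_congr [Finite V] {G H : SimpleGraph V} (h : deg G = deg H) :
    degMultiset G = degMultiset H := by
  rw [degMultiset, degMultiset, h]

namespace Iso

variable {G : SimpleGraph V} {H : SimpleGraph W}

lemma deg_apply (e : G ≃g H) (v : V) : deg H (e v) = deg G v := by
  rw [deg, deg, ← Nat.card_coe_set_eq, ← Nat.card_coe_set_eq]
  exact Nat.card_congr (e.mapNeighborSet v).symm

lemma degMultiset_eq [Finite V] [Finite W] (e : G ≃g H) : degMultiset G = degMultiset H := by
  have := Fintype.ofFinite V
  have := Fintype.ofFinite W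
  rw [degMultiset_eq_map_univ, degMultiset_eq_map_univ, ← Multiset.map_univ_val_equiv e.toEquiv,
    Multiset.map_map]
  exact congrArg (Multiset.map · _) (funext fun v => (e.deg_apply v).symm)

def compl (e : G ≃g H) : Gᶜ ≃g Hᶜ :=
  ⟨e.toEquiv, by simp [e.map_adj_iff]⟩

end Iso

end SimpleGraph

lemma IsSelfCompl.of_iso {G : SimpleGraph V} {H : SimpleGraph W} (e : G ≃g H)
    (h : IsSelfCompl H) : IsSelfCompl G :=
  h.map fun σ => (e.trans σ).trans e.compl.symm

lemma ForciblySC.isSelfCompl {τ : Multiset ℕ} (hτ : ForciblySC τ) [Finite V] {G : SimpleGraph V}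
    (hG : degMultiset G = τ) : IsSelfCompl G := by
  have := Fintype.ofFinite V
  have e : V ≃ Fin (Multiset.card τ) :=
    Fintype.equivFinOfCardEq (by rw [← hG, card_degMultiset, Nat.card_eq_fintype_card])
  exact .of_iso (Iso.map e G) (hτ _ ((Iso.map e G).degMultiset_eq.symm.trans hG))

lemma deg_apply_of_iso_compl [Finite V] {G : SimpleGraph V} (σ : G ≃g Gᶜ) (v : V) :
    deg G (σ v) = Nat.card V - 1 - deg G v := by
  have h₁ := σ.deg_apply v
  have h₂ := deg_lt_card G (σ v)
  rw [deg_compl] at h₁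
  omega

lemma range_card_sub_one_sub_deg [Finite V] {G : SimpleGraph V} (σ : G ≃g Gᶜ) :
    Set.range (fun v => Nat.card V - 1 - deg G v) = Set.range (deg G) := by
  simp_rw [← deg_apply_of_iso_compl σ]
  exact σ.surjective.range_comp (deg G)

/-- Both `d ∘ Fin.rev` and `n - 1 - d` enumerate the degrees in increasing order. -/
lemma StrictAnti.apply_rev_eq_of_iso_compl [Finite V] {G : SimpleGraph V} (σ : G ≃g Gᶜ) {l : ℕ}
    {d : Fin l → ℕ} (hd : StrictAnti d) (hrange : Set.range d = Set.range (deg G)) (j : Fin l) :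
    d j.rev = Nat.card V - 1 - d j := by
  have hlt : ∀ k, d k < Nat.card V := fun k => by
    obtain ⟨v, hv⟩ : d k ∈ Set.range (deg G) := hrange ▸ Set.mem_range_self k
    exact hv ▸ deg_lt_card G v
  have hmono_rev : StrictMono (d ∘ Fin.rev) := fun a b hab => hd (Fin.rev_lt_rev.mpr hab)
  have hmono_compl : StrictMono fun k => Nat.card V - 1 - d k := fun a b hab => by
    dsimp only
    have := hd hab
    have := hlt a
    omega
  have hranges : Set.range (d ∘ Fin.rev) = Set.range fun k => Nat.card V - 1 - d k := by
    rw [Fin.rev_surjective.range_comp, Set.range_comp' (fun k => Nat.card V - 1 - k), hrange,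
      ← Set.range_comp']
    exact (range_card_sub_one_sub_deg σ).symm
  exact congrFun ((hmono_rev.range_inj hmono_compl).mp hranges) j

lemma IsSelfCompl.induce_of_mapsTo [Finite V] {G : SimpleGraph V} (σ : G ≃g Gᶜ) {s : Set V}
    (hs : Set.MapsTo σ s s) : IsSelfCompl (G.induce s) := by
  have hbij : Set.BijOn σ s s :=
    (s.toFinite.injOn_iff_bijOn_of_mapsTo hs).mp σ.injective.injOn
  rw [IsSelfCompl, ← induce_compl]
  exact ⟨σ.induce hbij⟩

/-- The vertices of the `i`-th slice, `V_i ∪ V_{l+1-i}` in the paper's 1-based indexing. -/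
def sliceVerts (G : SimpleGraph V) {l : ℕ} (d : Fin l → ℕ) (i : Fin l) : Set V :=
  {v | deg G v = d i} ∪ {v | deg G v = d i.rev}

lemma isSelfCompl_induce_sliceVerts [Finite V] {G : SimpleGraph V} (hG : IsSelfCompl G) {l : ℕ}
    {d : Fin l → ℕ} (hd : StrictAnti d) (hrange : Set.range d = Set.range (deg G)) (i : Fin l) :
    IsSelfCompl (G.induce (sliceVerts G d i)) := by
  obtain ⟨σ⟩ := hG
  have hrev := hd.apply_rev_eq_of_iso_compl σ hrange
  refine IsSelfCompl.induce_of_mapsTo σ ?_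
  rintro v (hv | hv)
  · exact .inr (show deg G (σ v) = _ by rw [deg_apply_of_iso_compl, hv.out, hrev])
  · exact .inl (show deg G (σ v) = _ by rw [deg_apply_of_iso_compl, hv.out, ← hrev, Fin.rev_rev])

lemma card_fiber_eq_count_map_univ {α γ : Type*} [Fintype α] [DecidableEq γ] (f : α → γ)
    (c : γ) : Fintype.card {a // f a = c} = (Finset.univ.val.map f).count c := by
  rw [Multiset.count_map, Fintype.card_subtype, Finset.card_def, Finset.filter_val]
  simp only [eq_comm]

lemma exists_equiv_apply_eq_of_map_univ_eq {α β γ : Type*} [Fintype α] [Fintype β]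
    [DecidableEq γ] {f : α → γ} {g : β → γ}
    (h : Finset.univ.val.map f = Finset.univ.val.map g) : ∃ e : α ≃ β, ∀ a, g (e a) = f a := by
  have hfiber c : Fintype.card {a // f a = c} = Fintype.card {b // g b = c} := by
    rw [card_fiber_eq_count_map_univ, card_fiber_eq_count_map_univ, h]
  let e c := Fintype.equivOfCardEq (hfiber c)
  exact ⟨Equiv.ofFiberEquiv e, Equiv.ofFiberEquiv_map e⟩

lemma exists_equiv_deg_eq_of_degMultiset_eq [Finite V] [Finite W] {G : SimpleGraph V}
    {H : SimpleGraph W} (h : degMultiset G = degMultiset H) :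
    ∃ e : V ≃ W, ∀ v, deg H (e v) = deg G v := by
  have := Fintype.ofFinite V
  have := Fintype.ofFinite W
  rw [degMultiset_eq_map_univ, degMultiset_eq_map_univ] at h
  exact exists_equiv_apply_eq_of_map_univ_eq h

namespace SimpleGraph

def replaceInduce (G : SimpleGraph V) (s : Set V) (H : SimpleGraph s) : SimpleGraph V where
  Adj v w := (∃ (hv : v ∈ s) (hw : w ∈ s), H.Adj ⟨v, hv⟩ ⟨w, hw⟩) ∨ ((v ∉ s ∨ w ∉ s) ∧ G.Adj v w)
  symm := ⟨fun _ _ => by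
    rintro (⟨hv, hw, h⟩ | ⟨hs, h⟩)
    exacts [.inl ⟨hw, hv, h.symm⟩, .inr ⟨hs.symm, h.symm⟩]⟩
  loopless := ⟨fun _ => by rintro (⟨_, _, h⟩ | ⟨_, h⟩) <;> exact h.ne rfl⟩

variable {G : SimpleGraph V} {s : Set V} {H : SimpleGraph s}

lemma replaceInduce_adj_of_mem {v w : V} (hv : v ∈ s) (hw : w ∈ s) :
    (G.replaceInduce s H).Adj v w ↔ H.Adj ⟨v, hv⟩ ⟨w, hw⟩ := by
  simp [replaceInduce, hv, hw]

lemma replaceInduce_adj_of_notMem {v w : V} (hw : w ∉ s) :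
    (G.replaceInduce s H).Adj v w ↔ G.Adj v w := by
  simp [replaceInduce, hw]

lemma induce_replaceInduce : (G.replaceInduce s H).induce s = H := by
  ext v w
  exact replaceInduce_adj_of_mem v.2 w.2

lemma deg_replaceInduce [Finite V] (hH : ∀ v, deg H v = deg (G.induce s) v) (v : V) :
    deg (G.replaceInduce s H) v = deg G v := by
  by_cases hv : v ∈ s
  · have houter : (G.replaceInduce s H).neighborSet v \ s = G.neighborSet v \ s := by
      ext w
      simp only [Set.mem_sdiff, mem_neighborSet]
      exact and_congr_left replaceInduce_adj_of_notMem
    rw [deg_eq_deg_induce_add _ hv, deg_eq_deg_induce_add _ hv, induce_replaceInduce, hH, houter]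
  · have : (G.replaceInduce s H).neighborSet v = G.neighborSet v := by
      ext w
      rw [mem_neighborSet, mem_neighborSet, adj_comm, G.adj_comm]
      exact replaceInduce_adj_of_notMem hv
    rw [deg, deg, this]

end SimpleGraph

lemma forciblySC_degMultiset_induce_sliceVerts [Finite V] {G : SimpleGraph V}
    (hforc : ForciblySC (degMultiset G)) {l : ℕ} {d : Fin l → ℕ} (hd : StrictAnti d)
    (hrange : Set.range d = Set.range (deg G)) (i : Fin l) :
    ForciblySC (degMultiset (G.induce (sliceVerts G d i))) := by
  intro H hH
  obtain ⟨φ, hφ⟩ := exists_equiv_deg_eq_of_degMultiset_eq hH.symm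
  set G' := G.replaceInduce (sliceVerts G d i) (H.comap φ)
  have hdeg' : deg G' = deg G :=
    funext (deg_replaceInduce fun v => ((Iso.comap φ H).deg_apply v).symm.trans (hφ v))
  have hslice : sliceVerts G' d i = sliceVerts G d i := by simp only [sliceVerts, hdeg']
  have hsc := isSelfCompl_induce_sliceVerts (hforc.isSelfCompl (degMultiset_congr hdeg')) hd
    (hdeg' ▸ hrange) i
  rw [hslice, induce_replaceInduce] at hsc
  exact hsc.of_iso (Iso.comap φ H).symm

end

/-- Let `τ` be a forcibly self-complementary degree sequence and let
`G` be a realization of `τ` with `l` distinct vertex degrees `d 0 > d 1 > ... > d (l-1)`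
(`d` is strictly antitone, every vertex degree is some `d i`, and every `d i` is
attained).  Then for every `i`, the `i`-th slice `S_i` of `G`, i.e., the subgraph
induced by `V_i ∪ V_{l+1-i}` where `V_i = {v : deg v = d i}`, is self-complementary,
and its degree sequence is forcibly self-complementary. -/
theorem slice_forciblySC {V : Type*} [Finite V] (G : SimpleGraph V)
    (l : ℕ) (d : Fin l → ℕ) (hd : StrictAnti d)
    (hdeg : ∀ v, ∃ i, deg G v = d i) (hattain : ∀ i, ∃ v, deg G v = d i)
    (hforc : ForciblySC (degMultiset G)) (i : Fin l) :
    IsSelfCompl (G.induce ({v | deg G v = d i} ∪ {v | deg G v = d i.rev})) ∧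
    ForciblySC (degMultiset
      (G.induce ({v | deg G v = d i} ∪ {v | deg G v = d i.rev}))) := by
  have hrange : Set.range d = Set.range (deg G) := by
    ext k
    constructor
    · rintro ⟨j, rfl⟩
      exact hattain j
    · rintro ⟨v, rfl⟩
      exact (hdeg v).imp fun _ => Eq.symm
  exact ⟨isSelfCompl_induce_sliceVerts (hforc.isSelfCompl rfl) hd hrange i,
    forciblySC_degMultiset_induce_sliceVerts hforc hd hrange i⟩
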